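/- arXiv:2101.04818 — 6 statements merged into one kernel-verified Lean document; each statement's English description precedes it below -/
import Mathlib

section
/- For every weighted graph (V,w) and every hierarchical clustering tree T on V, cost(T) = 2·W + Σ over internal nodes of T of mergecost(A,B), where at each internal node A and B denote the leaf sets of its two children and W denotes the total weight Σ over unordered pairs {i,j} of distinct vertices of w(i,j). -/
open Finset

/-- A hierarchical clustering tree: a rooted binary tree with leaves labelled by vertices. -/
inductive HC (V : Type*) where
  | leaf : V → HC V
  | node : HC V → HC V → HC V

namespace HC

variable {V : Type*}

/-- The list of leaf labels of a tree, left to right. -/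
def leafList : HC V → List V
  | .leaf v => [v]
  | .node l r => leafList l ++ leafList r

/-- The set of leaf labels of a tree. -/
def leaves [DecidableEq V] (t : HC V) : Finset V :=
  t.leafList.toFinset

/-- `t.cluster i j` is the leaf set of the subtree of `t` rooted at the least common
ancestor of the leaves `i` and `j` (i.e. `leaves(T[i ∨ j])`). -/
def cluster [DecidableEq V] : HC V → V → V → Finset V
  | .leaf v, _, _ => {v}
  | .node l r, i, j =>
    if i ∈ l.leaves ∧ j ∈ l.leaves then l.cluster i j
    else if i ∈ r.leaves ∧ j ∈ r.leaves then r.cluster i j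
    else (HC.node l r).leaves

/-- `t` is a hierarchical clustering tree on the whole vertex type `V`:
its leaves are in bijection with `V`. -/
def IsTreeOn [Fintype V] [DecidableEq V] (t : HC V) : Prop :=
  t.leafList.Nodup ∧ t.leaves = Finset.univ

/-- Sum of `f A B` over all internal nodes of the tree, where `A`, `B` are the
leaf sets of the two children of the internal node. -/
def internalSum [DecidableEq V] (f : Finset V → Finset V → ℝ) : HC V → ℝ
  | .leaf _ => 0
  | .node l r => f l.leaves r.leaves + internalSum f l + internalSum f r

/-- The list of all subtrees of a tree. -/
def subtreesList : HC V → List (HC V)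
  | .leaf v => [.leaf v]
  | .node l r => .node l r :: (subtreesList l ++ subtreesList r)

/-- Dasgupta's cost: sum over unordered pairs `{i,j}` of distinct vertices of
`w i j * |leaves(T[i ∨ j])|`. -/
noncomputable def cost [Fintype V] [DecidableEq V] (w : V → V → ℝ) (t : HC V) : ℝ :=
  (1 / 2) * ∑ p ∈ Finset.univ.offDiag, w p.1 p.2 * ((t.cluster p.1 p.2).card : ℝ)

/-- Moseley–Wang revenue: sum over unordered pairs `{i,j}` of distinct vertices of
`w i j * |nonleaves(T[i ∨ j])|`. -/
noncomputable def rev [Fintype V] [DecidableEq V] (w : V → V → ℝ) (t : HC V) : ℝ :=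
  (1 / 2) * ∑ p ∈ Finset.univ.offDiag,
    w p.1 p.2 * ((Finset.univ \ t.cluster p.1 p.2).card : ℝ)

/-- Cohen-Addad et al.'s value: the same formula as cost, used for dissimilarity weights. -/
noncomputable def val [Fintype V] [DecidableEq V] (w : V → V → ℝ) (t : HC V) : ℝ :=
  cost w t

end HC

/-- The total weight `W`: the sum of `w i j` over unordered pairs of distinct vertices. -/
noncomputable def totalWeight {V : Type*} [Fintype V] [DecidableEq V] (w : V → V → ℝ) : ℝ :=
  (1 / 2) * ∑ p ∈ Finset.univ.offDiag, w p.1 p.2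

/-- The merge cost of merging disjoint clusters `A` and `B`. -/
noncomputable def mergeCost {V : Type*} [Fintype V] [DecidableEq V] (w : V → V → ℝ) (A B : Finset V) : ℝ :=
  (B.card : ℝ) * ∑ a ∈ A, ∑ c ∈ Finset.univ \ (A ∪ B), w a c
    + (A.card : ℝ) * ∑ b ∈ B, ∑ c ∈ Finset.univ \ (A ∪ B), w b c

/-- The merge revenue of merging disjoint clusters `A` and `B`. -/
noncomputable def mergeRev {V : Type*} [Fintype V] (w : V → V → ℝ) (A B : Finset V) : ℝ :=
  ((Fintype.card V : ℝ) - (A.card : ℝ) - (B.card : ℝ)) * ∑ a ∈ A, ∑ b ∈ B, w a b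

/-- The average linkage between disjoint nonempty clusters `A` and `B`. -/
noncomputable def avgLinkage {V : Type*} (w : V → V → ℝ) (A B : Finset V) : ℝ :=
  (1 / ((A.card : ℝ) * (B.card : ℝ))) * ∑ a ∈ A, ∑ b ∈ B, w a b

/-- A matching encoded as an involution `f : V → V`: the matched pairs are the pairs
`{v, f v}` with `f v ≠ v`; its weight is the sum of weights of matched pairs. -/
noncomputable def matchingWeight {V : Type*} [Fintype V] [DecidableEq V] (w : V → V → ℝ) (f : V → V) : ℝ :=
  (1 / 2) * ∑ v ∈ Finset.univ.filter (fun v => f v ≠ v), w v (f v)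

/-- A perfect matching encoded as a fixed-point-free involution. -/
def IsPerfectMatching {V : Type*} (f : V → V) : Prop :=
  (∀ v, f (f v) = v) ∧ ∀ v, f v ≠ v

/-! Induct on the tree, carrying the weight `∂S = Σ_{i ∈ S, c ∉ S} w(i,c)` of the edges leaving
the leaf set `S` of the current subtree. Summing over ordered pairs of distinct `i, j ∈ S`, every
subtree satisfies `Σ w(i,j)·|T[i ∨ j]| + 2(|S| - 1)·∂S = 2·Σ w(i,j) + 2·Σ mergecost`.
When `A` and `B` merge, an edge from `a ∈ A` to `c ∉ A ∪ B` is cut only at an ancestor whose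
cluster contains all of `B`, and `mergecost(A,B)` charges that `|B|·w(a,c)` in advance.
At the root `S = V`, so `∂S = 0`. -/

namespace Finset

variable {α β : Type*} [AddCommMonoid β]

theorem sum_product_comm_of_symm {f : α → α → β} (hf : ∀ i j, f i j = f j i) (s t : Finset α) :
    ∑ p ∈ t ×ˢ s, f p.1 p.2 = ∑ p ∈ s ×ˢ t, f p.1 p.2 := by
  rw [sum_product_right, sum_product]
  exact sum_congr rfl fun _ _ => sum_congr rfl fun _ _ => hf _ _

theorem sum_offDiag_union [DecidableEq α] {s t : Finset α} (h : Disjoint s t) (f : α × α → β) :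
    ∑ p ∈ (s ∪ t).offDiag, f p =
      ∑ p ∈ s.offDiag, f p + ∑ p ∈ t.offDiag, f p + ∑ p ∈ s ×ˢ t, f p + ∑ p ∈ t ×ˢ s, f p := by
  have hst : ∀ x ∈ s, x ∉ t := fun _ hx => disjoint_left.1 h hx
  have hts : ∀ x ∈ t, x ∉ s := fun _ hx => disjoint_right.1 h hx
  rw [offDiag_union h, sum_union, sum_union, sum_union]
  all_goals
    refine disjoint_left.2 fun p hp hq => ?_
    simp only [mem_union, mem_offDiag, mem_product] at hp hq
    grind

end Finset

namespace HC

variable {V : Type*} [DecidableEq V]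

theorem leaves_node (l r : HC V) : (node l r).leaves = l.leaves ∪ r.leaves := by
  simp [leaves, leafList]

theorem disjoint_leaves_of_nodup {l r : HC V} (h : (node l r).leafList.Nodup) :
    Disjoint l.leaves r.leaves := by
  rw [leafList, List.nodup_append] at h
  exact disjoint_left.2 fun _ hl hr =>
    h.2.2 _ (List.mem_toFinset.1 hl) _ (List.mem_toFinset.1 hr) rfl

section cluster

variable {l r : HC V} {i j : V}

theorem cluster_node_of_mem_left (hi : i ∈ l.leaves) (hj : j ∈ l.leaves) :
    (node l r).cluster i j = l.cluster i j := by
  simp [cluster, hi, hj]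

theorem cluster_node_of_mem_right (h : Disjoint l.leaves r.leaves) (hi : i ∈ r.leaves)
    (hj : j ∈ r.leaves) : (node l r).cluster i j = r.cluster i j := by
  simp [cluster, disjoint_right.1 h hi, hi, hj]

theorem cluster_node_of_mem_left_of_mem_right (h : Disjoint l.leaves r.leaves)
    (hi : i ∈ l.leaves) (hj : j ∈ r.leaves) : (node l r).cluster i j = (node l r).leaves := by
  simp [cluster, disjoint_right.1 h hj, disjoint_left.1 h hi]

theorem cluster_node_of_mem_right_of_mem_left (h : Disjoint l.leaves r.leaves)
    (hi : i ∈ r.leaves) (hj : j ∈ l.leaves) : (node l r).cluster i j = (node l r).leaves := by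
  simp [cluster, disjoint_right.1 h hi, disjoint_left.1 h hj]

end cluster

noncomputable def clusterSum (w : V → V → ℝ) (t : HC V) : ℝ :=
  ∑ p ∈ t.leaves.offDiag, w p.1 p.2 * ((t.cluster p.1 p.2).card : ℝ)

theorem clusterSum_node (w : V → V → ℝ) {l r : HC V} (h : (node l r).leafList.Nodup) :
    clusterSum w (node l r) = clusterSum w l + clusterSum w r +
      ((l.leaves ∪ r.leaves).card : ℝ) * ∑ p ∈ l.leaves ×ˢ r.leaves, w p.1 p.2 +
      ((l.leaves ∪ r.leaves).card : ℝ) * ∑ p ∈ r.leaves ×ˢ l.leaves, w p.1 p.2 := by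
  have hlr := disjoint_leaves_of_nodup h
  rw [clusterSum, leaves_node, sum_offDiag_union hlr, mul_sum, mul_sum]
  congr 1
  congr 1
  congr 1
  · refine sum_congr rfl fun p hp => ?_
    obtain ⟨hi, hj, -⟩ := mem_offDiag.1 hp
    rw [cluster_node_of_mem_left hi hj]
  · refine sum_congr rfl fun p hp => ?_
    obtain ⟨hi, hj, -⟩ := mem_offDiag.1 hp
    rw [cluster_node_of_mem_right hlr hi hj]
  · refine sum_congr rfl fun p hp => ?_
    obtain ⟨hi, hj⟩ := mem_product.1 hp
    rw [cluster_node_of_mem_left_of_mem_right hlr hi hj, leaves_node, mul_comm]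
  · refine sum_congr rfl fun p hp => ?_
    obtain ⟨hi, hj⟩ := mem_product.1 hp
    rw [cluster_node_of_mem_right_of_mem_left hlr hi hj, leaves_node, mul_comm]

end HC

section boundary

variable {V : Type*} [Fintype V] [DecidableEq V]

noncomputable def boundaryWeight (w : V → V → ℝ) (S : Finset V) : ℝ :=
  ∑ i ∈ S, ∑ c ∈ univ \ S, w i c

@[simp]
theorem boundaryWeight_univ (w : V → V → ℝ) : boundaryWeight w univ = 0 := by
  simp [boundaryWeight]

theorem boundaryWeight_eq_of_disjoint (w : V → V → ℝ) {A B : Finset V} (hAB : Disjoint A B) :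
    boundaryWeight w A = ∑ p ∈ A ×ˢ B, w p.1 p.2 + ∑ a ∈ A, ∑ c ∈ univ \ (A ∪ B), w a c := by
  have hB : B ⊆ univ \ A := fun b hb => mem_sdiff.2 ⟨mem_univ b, disjoint_right.1 hAB hb⟩
  rw [boundaryWeight, sum_product, ← sum_add_distrib]
  refine sum_congr rfl fun a _ => ?_
  rw [← sum_sdiff hB, sdiff_sdiff_left]
  exact add_comm _ _

theorem HC.clusterSum_add_boundaryWeight {w : V → V → ℝ} (hsymm : ∀ i j, w i j = w j i)
    {t : HC V} (ht : t.leafList.Nodup) :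
    t.clusterSum w + 2 * ((t.leaves.card : ℝ) - 1) * boundaryWeight w t.leaves =
      2 * ∑ p ∈ t.leaves.offDiag, w p.1 p.2 + 2 * t.internalSum (mergeCost w) := by
  induction t with
  | leaf v => simp [HC.clusterSum, HC.leaves, HC.leafList, HC.internalSum]
  | node l r ihl ihr =>
    have hlr := HC.disjoint_leaves_of_nodup ht
    obtain ⟨hl_nodup, hr_nodup, -⟩ := List.nodup_append.1 ht
    have hl := ihl hl_nodup
    have hr := ihr hr_nodup
    rw [boundaryWeight_eq_of_disjoint w hlr] at hl
    rw [boundaryWeight_eq_of_disjoint w hlr.symm, union_comm,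
      sum_product_comm_of_symm hsymm l.leaves r.leaves] at hr
    rw [HC.clusterSum_node w ht, HC.leaves_node, boundaryWeight, sum_union hlr,
      sum_offDiag_union hlr, sum_product_comm_of_symm hsymm l.leaves r.leaves,
      card_union_of_disjoint hlr, HC.internalSum, mergeCost]
    push_cast
    linear_combination hl + hr

end boundary

theorem stmt1_general {V : Type*} [Fintype V] [DecidableEq V]
    (w : V → V → ℝ) (hsymm : ∀ i j, w i j = w j i)
    (t : HC V) (ht : t.IsTreeOn) :
    HC.cost w t = 2 * totalWeight w + HC.internalSum (mergeCost w) t := by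
  obtain ⟨hnodup, huniv⟩ := ht
  have h := HC.clusterSum_add_boundaryWeight hsymm hnodup
  rw [HC.clusterSum, huniv, boundaryWeight_univ, mul_zero, add_zero] at h
  rw [HC.cost, totalWeight]
  linarith

/-- `cost(T) = 2·W + Σ over internal nodes of T of mergecost(A, B)`, where at each
internal node `A` and `B` are the leaf sets of its two children. -/
theorem stmt1 {V : Type*} [Fintype V] [DecidableEq V]
    (w : V → V → ℝ) (hsymm : ∀ i j, w i j = w j i) (hnonneg : ∀ i j, 0 ≤ w i j)
    (t : HC V) (ht : t.IsTreeOn) :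
    HC.cost w t = 2 * totalWeight w + HC.internalSum (mergeCost w) t :=
  stmt1_general w hsymm t ht
end

section
/- Let (V,w) be a weighted graph, let C = {C_1,…,C_m} be a partition of V into m clusters each of size exactly s, and let M be a perfect matching on C, i.e. a partition of C into m/2 unordered pairs of clusters (m even). Then Σ_{{A,B}∈M} mergecost(A,B) = 2s³·Σ avg(C,C'), where the second sum ranges over all unordered pairs {C,C'} of distinct clusters of C that are not matched together by M. -/
open Finset

/-- For a partition of `V` into clusters `C 0, ..., C (m-1)` each of size `s` and a perfect
matching `M` on the clusters (encoded by the fixed-point-free involution `σ` on indices),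
`Σ_{{A,B} ∈ M} mergecost(A,B) = 2s³·Σ avg(C,C')`, the second sum ranging over unordered
pairs of distinct clusters not matched together by `M`. -/
theorem stmt5 {V : Type*} [Fintype V] [DecidableEq V] (m s : ℕ)
    (w : V → V → ℝ) (hsymm : ∀ i j, w i j = w j i) (hnonneg : ∀ i j, 0 ≤ w i j)
    (C : Fin m → Finset V)
    (hdisj : ∀ i j, i ≠ j → Disjoint (C i) (C j))
    (hcover : ∀ v : V, ∃ i, v ∈ C i)
    (hsize : ∀ i, (C i).card = s)
    (σ : Fin m → Fin m) (hσ : ∀ i, σ (σ i) = i) (hσ' : ∀ i, σ i ≠ i) :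
    (1 / 2) * ∑ i, mergeCost w (C i) (C (σ i)) =
      2 * (s : ℝ) ^ 3 *
        ((1 / 2) * ∑ p ∈ Finset.univ.offDiag.filter (fun p : Fin m × Fin m => σ p.1 ≠ p.2),
          avgLinkage w (C p.1) (C p.2)) := by
  classical
  set S : Fin m → Fin m → ℝ := fun i j => ∑ a ∈ C i, ∑ b ∈ C j, w a b with hSdef
  -- complement of two clusters as union of others
  have hcompl : ∀ i j : Fin m, Finset.univ \ (C i ∪ C j)
      = (Finset.univ.filter (fun k => k ≠ i ∧ k ≠ j)).biUnion C := by
    intro i j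
    ext v
    simp only [mem_sdiff, mem_union, mem_biUnion, mem_filter, mem_univ, true_and]
    constructor
    · rintro hv
      push_neg at hv
      obtain ⟨k, hk⟩ := hcover v
      refine ⟨k, ⟨?_, ?_⟩, hk⟩
      · rintro rfl; exact hv.1 hk
      · rintro rfl; exact hv.2 hk
    · rintro ⟨k, ⟨hki, hkj⟩, hk⟩
      push_neg
      exact ⟨Finset.disjoint_left.mp (hdisj k i hki) hk,
             Finset.disjoint_left.mp (hdisj k j hkj) hk⟩
  have hsum : ∀ (i j : Fin m) (a : V), ∑ c ∈ Finset.univ \ (C i ∪ C j), w a c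
      = ∑ k ∈ Finset.univ.filter (fun k => k ≠ i ∧ k ≠ j), ∑ c ∈ C k, w a c := by
    intro i j a
    rw [hcompl i j]
    exact Finset.sum_biUnion (fun x hx y hy hxy => hdisj x y hxy)
  have hmc : ∀ i j : Fin m, mergeCost w (C i) (C j)
      = (s : ℝ) * ∑ k ∈ Finset.univ.filter (fun k => k ≠ i ∧ k ≠ j), (S i k + S j k) := by
    intro i j
    unfold mergeCost
    rw [hsize, hsize,
        Finset.sum_congr rfl (fun a _ => hsum i j a),
        Finset.sum_congr rfl (fun b _ => hsum i j b),
        Finset.sum_comm (s := C i), Finset.sum_comm (s := C j),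
        Finset.sum_add_distrib]
    ring
  have hswap : (∑ i, ∑ k ∈ Finset.univ.filter (fun k => k ≠ i ∧ k ≠ σ i), S (σ i) k)
      = ∑ i, ∑ k ∈ Finset.univ.filter (fun k => k ≠ i ∧ k ≠ σ i), S i k := by
    have hinv : Function.Involutive σ := hσ
    have := Function.Bijective.sum_comp hinv.bijective
      (fun i => ∑ k ∈ Finset.univ.filter (fun k => k ≠ σ i ∧ k ≠ i), S i k)
    calc (∑ i, ∑ k ∈ Finset.univ.filter (fun k => k ≠ i ∧ k ≠ σ i), S (σ i) k)
        = ∑ i, ∑ k ∈ Finset.univ.filter (fun k => k ≠ σ (σ i) ∧ k ≠ σ i), S (σ i) k := by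
          refine Finset.sum_congr rfl fun i _ => ?_
          rw [hσ i]
      _ = ∑ i, ∑ k ∈ Finset.univ.filter (fun k => k ≠ σ i ∧ k ≠ i), S i k := this
      _ = ∑ i, ∑ k ∈ Finset.univ.filter (fun k => k ≠ i ∧ k ≠ σ i), S i k := by
          refine Finset.sum_congr rfl fun i _ => ?_
          congr 1
          ext k
          simp [and_comm]
  set X : ℝ := ∑ i, ∑ k ∈ Finset.univ.filter (fun k => k ≠ i ∧ k ≠ σ i), S i k with hX
  have hLHS : (1 / 2) * ∑ i, mergeCost w (C i) (C (σ i)) = (s : ℝ) * X := by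
    rw [Finset.sum_congr rfl (fun i _ => hmc i (σ i))]
    rw [← Finset.mul_sum]
    have : ∑ i, ∑ k ∈ Finset.univ.filter (fun k => k ≠ i ∧ k ≠ σ i), (S i k + S (σ i) k)
        = 2 * X := by
      rw [Finset.sum_congr rfl (fun i _ => Finset.sum_add_distrib),
          Finset.sum_add_distrib, hswap, hX]
      ring
    rw [this]; ring
  -- rewrite the RHS sum
  have hfilter : Finset.univ.offDiag.filter (fun p : Fin m × Fin m => σ p.1 ≠ p.2)
      = (Finset.univ ×ˢ Finset.univ).filter
          (fun p : Fin m × Fin m => p.2 ≠ p.1 ∧ p.2 ≠ σ p.1) := by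
    ext p
    simp only [mem_filter, Finset.mem_offDiag, mem_product, mem_univ, true_and]
    constructor
    · rintro ⟨h1, h2⟩; exact ⟨h1.symm, fun h => h2 h.symm⟩
    · rintro ⟨h1, h2⟩; exact ⟨h1.symm, fun h => h2 h.symm⟩
  have havg : ∀ p : Fin m × Fin m, avgLinkage w (C p.1) (C p.2)
      = (1 / ((s : ℝ) * (s : ℝ))) * S p.1 p.2 := by
    intro p
    unfold avgLinkage
    rw [hsize, hsize]
  have hRHSsum : (∑ p ∈ Finset.univ.offDiag.filter (fun p : Fin m × Fin m => σ p.1 ≠ p.2),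
        avgLinkage w (C p.1) (C p.2)) = (1 / ((s : ℝ) * (s : ℝ))) * X := by
    rw [Finset.sum_congr rfl (fun p _ => havg p), ← Finset.mul_sum]
    congr 1
    rw [hfilter, Finset.sum_filter, Finset.sum_product, hX]
    refine Finset.sum_congr rfl fun i _ => ?_
    rw [Finset.sum_filter]
  rw [hLHS, hRHSsum]
  rcases Nat.eq_zero_or_pos s with hs | hs
  · have hX0 : X = 0 := by
      rw [hX]
      refine Finset.sum_eq_zero fun i _ => Finset.sum_eq_zero fun k _ => ?_
      have : C i = ∅ := Finset.card_eq_zero.mp (by rw [hsize i, hs])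
      simp [hSdef, this]
    rw [hX0]; ring
  · have hs' : (s : ℝ) ≠ 0 := Nat.cast_ne_zero.mpr hs.ne'
    field_simp
end

section
/- Let m ≥ 2 be even, let V be a set of m elements, and let M be a perfect matching on V, i.e. a partition of V into m/2 unordered pairs. Then the collection of all unordered pairs of distinct elements of V that do not belong to M can be partitioned into m−2 perfect matchings on V. -/
open Finset

/-! Round-robin scheduling. Identify `V` with `Option (ZMod (m - 1))`, the point `none` playing
the role of `∞`. For each `t`, pairing `∞` with `t` and `i` with `2 t - i` is a perfect matching,
and since `m - 1` is odd, `2` is invertible, so every pair `{i, j}` lies in exactly one of them,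
namely the one with `t = (i + j) / 2` (and `{∞, j}` in the one with `t = j`). All perfect matchings
on a finite set are conjugate, so `σ` may be taken to be the matching with `t = 0`; the other
`m - 2` matchings decompose its complement. -/

def IsFactorizationOfCompl {V ι : Type*} (σ : V → V) (F : ι → V → V) : Prop :=
  (∀ t, IsPerfectMatching (F t)) ∧ (∀ t v, F t v ≠ σ v) ∧
    ∀ u v, u ≠ v → σ u ≠ v → ∃! t, F t u = v

namespace IsPerfectMatching

variable {α β : Type*} {f : α → α} {g : β → β}

theorem conj (hg : IsPerfectMatching g) (e : α ≃ β) :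
    IsPerfectMatching fun v => e.symm (g (e v)) :=
  ⟨fun v => by simp [hg.1], fun v h => hg.2 (e v) (by simpa using congrArg e h)⟩

theorem cycleType_toPerm [Fintype α] [DecidableEq α] (hf : IsPerfectMatching f) :
    (Function.Involutive.toPerm f hf.1).cycleType = Multiset.replicate (Fintype.card α / 2) 2 := by
  set p := Function.Involutive.toPerm f hf.1
  have hp : p.cycleType = Multiset.replicate (Multiset.card p.cycleType) 2 :=
    Equiv.Perm.cycleType_of_pow_prime_eq_one (by ext v; exact hf.1 v)
  have hsum : p.cycleType.sum = Fintype.card α := by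
    rw [Equiv.Perm.sum_cycleType, (Finset.card_eq_iff_eq_univ _).2]
    ext v
    simp only [Equiv.Perm.mem_support, Finset.mem_univ, iff_true]
    exact hf.2 v
  rw [hp, Multiset.sum_replicate, smul_eq_mul] at hsum
  rw [hp, ← hsum, Nat.mul_div_cancel _ two_pos]

theorem exists_equiv_conj [Fintype α] [Fintype β] (hcard : Fintype.card α = Fintype.card β)
    (hf : IsPerfectMatching f) (hg : IsPerfectMatching g) :
    ∃ e : α ≃ β, ∀ v, e (f v) = g (e v) := by
  classical
  let e₀ := Fintype.equivOfCardEq hcard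
  have hg' := hg.conj e₀
  obtain ⟨c, hc⟩ := isConj_iff.1 <| Equiv.Perm.isConj_iff_cycleType_eq.2
    ((hf.cycleType_toPerm).trans (hg'.cycleType_toPerm).symm)
  refine ⟨c.trans e₀, fun v => ?_⟩
  have h := congrArg (fun p : Equiv.Perm α => p (c v)) hc
  simp only [Equiv.Perm.mul_apply, Equiv.Perm.coe_inv, Equiv.symm_apply_apply] at h
  exact (e₀.eq_symm_apply).1 h

end IsPerfectMatching

theorem IsFactorizationOfCompl.conj {α β ι κ : Type*} {σ : α → α} {g : β → β} {F : ι → β → β}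
    (hF : IsFactorizationOfCompl g F) (e : α ≃ β) (he : ∀ v, e (σ v) = g (e v)) (r : κ ≃ ι) :
    IsFactorizationOfCompl σ fun k v => e.symm (F (r k) (e v)) := by
  obtain ⟨hmatch, havoid, hcover⟩ := hF
  refine ⟨fun k => (hmatch (r k)).conj e, fun k v h => havoid (r k) (e v) ?_, fun u v huv hσ => ?_⟩
  · rw [← he, ← e.symm_apply_eq.1 h]
  · have hσ' : g (e u) ≠ e v := by rw [← he]; exact e.injective.ne hσ
    obtain ⟨t, ht, huniq⟩ := hcover (e u) (e v) (e.injective.ne huv) hσ'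
    refine ⟨r.symm t, by simp [ht], fun k hk => r.eq_symm_apply.2 (huniq _ ?_)⟩
    simpa using congrArg e hk

section RoundRobin

variable {R : Type*} [CommRing R] [DecidableEq R] {t : R}

/-- Round `t` of the circle method for round-robin tournaments. -/
def roundRobin (t : R) : Option R → Option R
  | none => some t
  | some i => if i = t then none else some (2 * t - i)

@[simp]
theorem roundRobin_none : roundRobin t none = some t := rfl

theorem roundRobin_some (i : R) :
    roundRobin t (some i) = if i = t then none else some (2 * t - i) := rfl

theorem roundRobin_some_eq_none {i : R} : roundRobin t (some i) = none ↔ i = t := by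
  rw [roundRobin_some]
  split_ifs <;> simpa

theorem roundRobin_some_eq_some {i j : R} :
    roundRobin t (some i) = some j ↔ i ≠ t ∧ 2 * t = i + j := by
  rw [roundRobin_some]
  split_ifs with h
  · simp [h]
  · simp only [Option.some.injEq, ne_eq, h, not_false_eq_true, true_and]
    constructor <;> intro h' <;> linear_combination h'

theorem roundRobin_involutive (t : R) : Function.Involutive (roundRobin t)
  | none => by simp [roundRobin_some]
  | some i => by
    by_cases h : i = t
    · simp [roundRobin_some, h]
    · have h' : 2 * t - i ≠ t := fun h' => h (by linear_combination -h')
      simp [roundRobin_some, h, h']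

variable (h2 : IsUnit (2 : R))
include h2

theorem roundRobin_ne_self (t : R) (v : Option R) : roundRobin t v ≠ v := by
  rcases v with _ | i
  · simp
  · intro h
    obtain ⟨hit, hti⟩ := roundRobin_some_eq_some.1 h
    exact hit (h2.mul_left_cancel (by linear_combination -hti))

theorem isPerfectMatching_roundRobin (t : R) : IsPerfectMatching (roundRobin t) :=
  ⟨roundRobin_involutive t, roundRobin_ne_self h2 t⟩

theorem existsUnique_roundRobin_eq {u v : Option R} (huv : u ≠ v) :
    ∃! t, roundRobin t u = v := by
  rcases u with _ | i <;> rcases v with _ | j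
  · exact absurd rfl huv
  · exact ⟨j, rfl, fun t ht => Option.some.inj ht⟩
  · exact ⟨i, roundRobin_some_eq_none.2 rfl, fun t ht => (roundRobin_some_eq_none.1 ht).symm⟩
  · have hij : i ≠ j := fun h => huv (congrArg some h)
    obtain ⟨c, hc⟩ := h2.exists_left_inv
    -- the midpoint `(i + j) / 2`
    have hmid : 2 * (c * (i + j)) = i + j := by linear_combination (i + j) * hc
    refine ⟨c * (i + j), roundRobin_some_eq_some.2 ⟨fun h => hij ?_, hmid⟩, fun t ht => ?_⟩
    · rw [← h] at hmid
      linear_combination hmid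
    · exact h2.mul_left_cancel ((roundRobin_some_eq_some.1 ht).2.trans hmid.symm)

theorem roundRobin_ne_roundRobin {s : R} (hts : t ≠ s) (v : Option R) :
    roundRobin t v ≠ roundRobin s v := fun h =>
  hts ((existsUnique_roundRobin_eq h2 (roundRobin_ne_self h2 s v).symm).unique h rfl)

theorem isFactorizationOfCompl_roundRobin :
    IsFactorizationOfCompl (roundRobin 0) fun t : {t : R // t ≠ 0} => roundRobin t.1 := by
  refine ⟨fun t => isPerfectMatching_roundRobin h2 t, fun t => roundRobin_ne_roundRobin h2 t.2,
    fun u v huv h0 => ?_⟩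
  obtain ⟨t, ht, huniq⟩ := existsUnique_roundRobin_eq h2 huv
  have ht0 : t ≠ 0 := by rintro rfl; exact h0 ht
  exact ⟨⟨t, ht0⟩, ht, fun s hs => Subtype.ext (huniq s hs)⟩

end RoundRobin

theorem stmt6_general {V : Type*} [Fintype V] (m : ℕ) (hm : 2 ≤ m)
    (hm2 : Even m) (hcard : Fintype.card V = m)
    (σ : V → V) (hσ : ∀ v, σ (σ v) = v) (hσ' : ∀ v, σ v ≠ v) :
    ∃ F : Fin (m - 2) → V → V,
      (∀ t v, F t (F t v) = v) ∧ (∀ t v, F t v ≠ v) ∧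
      (∀ t v, F t v ≠ σ v) ∧
      (∀ u v : V, u ≠ v → σ u ≠ v → ∃! t, F t u = v) := by
  obtain ⟨n, rfl⟩ : ∃ n, m = n + 1 := ⟨m - 1, by omega⟩
  have : NeZero n := ⟨by omega⟩
  have h2 : IsUnit (2 : ZMod n) :=
    (ZMod.isUnit_iff_coprime 2 n).2 (Nat.coprime_two_left.2 (by simpa [parity_simps] using hm2))
  obtain ⟨e, he⟩ := IsPerfectMatching.exists_equiv_conj (by simp [hcard, ZMod.card])
    ⟨hσ, hσ'⟩ (isPerfectMatching_roundRobin h2 0)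
  have hindex : Fintype.card (Fin (n + 1 - 2)) = Fintype.card {t : ZMod n // t ≠ 0} := by
    simp [Fintype.card_subtype_compl, ZMod.card]
  have hF := (isFactorizationOfCompl_roundRobin h2).conj e he (Fintype.equivOfCardEq hindex)
  exact ⟨_, fun t => (hF.1 t).1, fun t => (hF.1 t).2, hF.2.1, hF.2.2⟩

/-- For even `m ≥ 2`, a set `V` of `m` elements, and a perfect matching `M` on `V`
(encoded by the fixed-point-free involution `σ`), the unordered pairs of distinct elements
not belonging to `M` can be partitioned into `m − 2` perfect matchings on `V`
(encoded by fixed-point-free involutions `F t`, with every non-`M` pair covered by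
exactly one of them and no `M` pair covered). -/
theorem stmt6 {V : Type*} [Fintype V] [DecidableEq V] (m : ℕ) (hm : 2 ≤ m)
    (hm2 : Even m) (hcard : Fintype.card V = m)
    (σ : V → V) (hσ : ∀ v, σ (σ v) = v) (hσ' : ∀ v, σ v ≠ v) :
    ∃ F : Fin (m - 2) → V → V,
      (∀ t v, F t (F t v) = v) ∧ (∀ t v, F t v ≠ v) ∧
      (∀ t v, F t v ≠ σ v) ∧
      (∀ u v : V, u ≠ v → σ u ≠ v → ∃! t, F t u = v) :=
  stmt6_general m hm hm2 hcard σ hσ hσ'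
end

section
/- Let (V,w) be a weighted graph, let C = {C_1,…,C_m} be a partition of V into m clusters each of size exactly s, with m even, and let 0 ≤ ε < 1. For a perfect matching M' on C write avgweight(M') = Σ_{{A,B}∈M'} avg(A,B). If M is a perfect matching on C such that avgweight(M) ≥ (1−ε)·avgweight(M') for every perfect matching M' on C, then Σ_{{A,B}∈M} mergecost(A,B) ≤ (2/(1−ε))·Σ_{{A,B}∈M} mergerev(A,B). -/
open Finset

section Aux


section Model
variable {q : ℕ} [NeZero q]

def Fc (c : ZMod q) : Option (ZMod q) → Option (ZMod q)
  | none => some c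
  | some i => if i = c then none else some (2*c - i)

lemma two_unit (hq : Odd q) : IsUnit (2 : ZMod q) := by
  have : ((2:ℕ) : ZMod q) = (2 : ZMod q) := by push_cast; ring
  rw [← this, ZMod.isUnit_iff_coprime]
  exact Nat.coprime_two_left.mpr hq

lemma two_mul_inj (hq : Odd q) {x y : ZMod q} (h : 2*x = 2*y) : x = y :=
  (two_unit hq).mul_left_cancel h

lemma Fc_invol (c : ZMod q) (v : Option (ZMod q)) : Fc c (Fc c v) = v := by
  match v with
  | none => simp [Fc]
  | some i =>
    by_cases h : i = c
    · simp [Fc, h]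
    · have h2 : 2*c - i ≠ c := fun hh => h (by linear_combination -hh)
      simp only [Fc, if_neg h, if_neg h2, Option.some.injEq]
      ring

lemma Fc_ne (hq : Odd q) (c : ZMod q) (v : Option (ZMod q)) : Fc c v ≠ v := by
  match v with
  | none => simp [Fc]
  | some i =>
    by_cases h : i = c
    · simp [Fc, h]
    · simp only [Fc, if_neg h, Ne, Option.some.injEq]
      intro hh
      exact h (two_mul_inj hq (by linear_combination hh)).symm

lemma Fc_inj_c (hq : Odd q) (v : Option (ZMod q)) {c c' : ZMod q}
    (h : Fc c v = Fc c' v) : c = c' := by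
  match v with
  | none => simpa [Fc] using h
  | some i =>
    by_cases h1 : i = c <;> by_cases h2 : i = c'
    · rw [← h1, ← h2]
    · rw [Fc, Fc, if_pos h1, if_neg h2] at h; exact absurd h (by simp)
    · rw [Fc, Fc, if_pos h2, if_neg h1] at h; exact absurd h (by simp)
    · rw [Fc, Fc, if_neg h1, if_neg h2, Option.some.injEq] at h
      exact two_mul_inj hq (by linear_combination h)

lemma Fc_ne_zero (hq : Odd q) {c : ZMod q} (hc : c ≠ 0) (v : Option (ZMod q)) :
    Fc c v ≠ Fc 0 v := by
  match v with
  | none => simpa [Fc] using hc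
  | some i =>
    by_cases h1 : i = c <;> by_cases h2 : i = 0
    · exact absurd (h1 ▸ h2) hc
    · rw [Fc, Fc, if_pos h1, if_neg h2]; simp
    · rw [Fc, Fc, if_pos h2, if_neg h1]; simp
    · rw [Fc, Fc, if_neg h1, if_neg h2, Ne, Option.some.injEq]
      intro hh
      exact hc (two_mul_inj hq (by linear_combination hh))

end Model

lemma half_card {m : ℕ} (f : Fin m → Fin m) (h1 : ∀ v, f (f v) = v) (h2 : ∀ v, f v ≠ v) :
    2 * (univ.filter (fun x => x < f x)).card = m := by
  classical
  have hcards : (univ.filter (fun x => x < f x)).card = (univ.filter (fun x => f x < x)).card := by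
    apply Finset.card_nbij' (i := f) (j := f)
    · intro x hx
      simp only [mem_coe, mem_filter, mem_univ, true_and] at hx ⊢
      rw [h1]; exact hx
    · intro x hx
      simp only [mem_coe, mem_filter, mem_univ, true_and] at hx ⊢
      rw [h1]; exact hx
    · intro x _; exact h1 x
    · intro x _; exact h1 x
  have key := Finset.card_filter_add_card_filter_not
    (s := (univ : Finset (Fin m))) (p := fun x => x < f x)
  have hBeq : (univ.filter (fun a => ¬ (fun x => x < f x) a)) = univ.filter (fun x => f x < x) := by
    ext x
    simp only [mem_filter, mem_univ, true_and, not_lt]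
    constructor
    · intro h; exact lt_of_le_of_ne h (h2 x)
    · intro h; exact le_of_lt h
  rw [hBeq] at key
  simp only [card_univ, Fintype.card_fin] at key
  omega

lemma conj_invol {m : ℕ} (σ τ : Fin m → Fin m)
    (hσ1 : ∀ v, σ (σ v) = v) (hσ2 : ∀ v, σ v ≠ v)
    (hτ1 : ∀ v, τ (τ v) = v) (hτ2 : ∀ v, τ v ≠ v) :
    ∃ g : Fin m ≃ Fin m, ∀ x, g (σ x) = τ (g x) := by
  classical
  set R : Finset (Fin m) := univ.filter (fun x => x < σ x) with hR
  set R' : Finset (Fin m) := univ.filter (fun x => x < τ x) with hR'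
  have hcard : R.card = R'.card := by
    have e1 := half_card σ hσ1 hσ2
    have e2 := half_card τ hτ1 hτ2
    rw [← hR] at e1; rw [← hR'] at e2
    omega
  have keyσ : ∀ x, x ∉ R → σ x ∈ R := by
    intro x hx
    simp only [hR, mem_filter, mem_univ, true_and, not_lt] at hx ⊢
    rw [hσ1]
    exact lt_of_le_of_ne hx (hσ2 x)
  have keyσ' : ∀ x, x ∈ R → σ x ∉ R := by
    intro x hx
    simp only [hR, mem_filter, mem_univ, true_and, not_lt, hσ1] at hx ⊢
    exact le_of_lt hx
  have keyτ : ∀ x, x ∉ R' → τ x ∈ R' := by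
    intro x hx
    simp only [hR', mem_filter, mem_univ, true_and, not_lt] at hx ⊢
    rw [hτ1]
    exact lt_of_le_of_ne hx (hτ2 x)
  have keyτ' : ∀ x, x ∈ R' → τ x ∉ R' := by
    intro x hx
    simp only [hR', mem_filter, mem_univ, true_and, not_lt, hτ1] at hx ⊢
    exact le_of_lt hx
  obtain h := Finset.equivOfCardEq hcard
  set G : Fin m → Fin m :=
    fun x => if hx : x ∈ R then (h ⟨x, hx⟩ : Fin m) else τ (h ⟨σ x, keyσ x hx⟩ : Fin m) with hG
  set G' : Fin m → Fin m :=
    fun y => if hy : y ∈ R' then (h.symm ⟨y, hy⟩ : Fin m) else σ (h.symm ⟨τ y, keyτ y hy⟩ : Fin m)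
    with hG'
  refine ⟨⟨G, G', ?_, ?_⟩, ?_⟩
  · intro x
    rw [hG, hG']
    by_cases hx : x ∈ R
    · simp only [dif_pos hx]
      have hy : (h ⟨x, hx⟩ : Fin m) ∈ R' := (h ⟨x, hx⟩).2
      rw [dif_pos hy]
      have e : (⟨(h ⟨x, hx⟩ : Fin m), hy⟩ : {x // x ∈ R'}) = h ⟨x, hx⟩ := Subtype.ext rfl
      rw [e, Equiv.symm_apply_apply]
    · simp only [dif_neg hx]
      have hy0m : (h ⟨σ x, keyσ x hx⟩ : Fin m) ∈ R' := (h ⟨σ x, keyσ x hx⟩).2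
      have hny : τ (h ⟨σ x, keyσ x hx⟩ : Fin m) ∉ R' := keyτ' _ hy0m
      rw [dif_neg hny]
      have e1 : (⟨τ (τ (h ⟨σ x, keyσ x hx⟩ : Fin m)), keyτ _ hny⟩ : {x // x ∈ R'})
          = h ⟨σ x, keyσ x hx⟩ := Subtype.ext (hτ1 _)
      rw [e1, Equiv.symm_apply_apply]
      exact hσ1 x
  · intro y
    rw [hG, hG']
    by_cases hy : y ∈ R'
    · simp only [dif_pos hy]
      have hx : (h.symm ⟨y, hy⟩ : Fin m) ∈ R := (h.symm ⟨y, hy⟩).2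
      rw [dif_pos hx]
      have e : (⟨(h.symm ⟨y, hy⟩ : Fin m), hx⟩ : {x // x ∈ R}) = h.symm ⟨y, hy⟩ := Subtype.ext rfl
      rw [e, Equiv.apply_symm_apply]
    · simp only [dif_neg hy]
      have hx0m : (h.symm ⟨τ y, keyτ y hy⟩ : Fin m) ∈ R := (h.symm ⟨τ y, keyτ y hy⟩).2
      have hnx : σ (h.symm ⟨τ y, keyτ y hy⟩ : Fin m) ∉ R := keyσ' _ hx0m
      rw [dif_neg hnx]
      have e1 : (⟨σ (σ (h.symm ⟨τ y, keyτ y hy⟩ : Fin m)), keyσ _ hnx⟩ : {x // x ∈ R})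
          = h.symm ⟨τ y, keyτ y hy⟩ := Subtype.ext (hσ1 _)
      rw [e1, Equiv.apply_symm_apply]
      exact hτ1 y
  · intro x
    simp only [Equiv.coe_fn_mk]
    rw [hG]
    by_cases hx : x ∈ R
    · have hnx : σ x ∉ R := keyσ' x hx
      simp only [dif_neg hnx, dif_pos hx]
      have e : (⟨σ (σ x), keyσ _ hnx⟩ : {x // x ∈ R}) = ⟨x, hx⟩ := Subtype.ext (hσ1 x)
      rw [e]
    · have hsx : σ x ∈ R := keyσ x hx
      simp only [dif_pos hsx, dif_neg hx]
      rw [hτ1]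

lemma exists_family {m : ℕ} (σ : Fin m → Fin m)
    (h1 : ∀ v, σ (σ v) = v) (h2 : ∀ v, σ v ≠ v) :
    ∃ τ : Fin (m-2) → Fin m → Fin m,
      (∀ k, (∀ v, τ k (τ k v) = v) ∧ (∀ v, τ k v ≠ v)) ∧
      (∀ i, Function.Injective (fun k => τ k i)) ∧
      (∀ k i, τ k i ≠ i ∧ τ k i ≠ σ i) := by
  classical
  rcases lt_or_ge m 2 with hm | hm
  · refine ⟨fun _ => σ, ?_, ?_, ?_⟩
    · intro k; exact absurd k.isLt (by omega)
    · intro i k; exact absurd k.isLt (by omega)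
    · intro k; exact absurd k.isLt (by omega)
  · obtain ⟨t, ht⟩ : ∃ t, m = 2 * t := ⟨_, (half_card σ h1 h2).symm⟩
    set q := m - 1 with hqdef
    haveI : NeZero q := ⟨by omega⟩
    have hq : Odd q := ⟨t - 1, by omega⟩
    have hcard : Fintype.card (Fin m) = Fintype.card (Option (ZMod q)) := by
      rw [Fintype.card_option, ZMod.card, Fintype.card_fin]
      omega
    obtain e := Fintype.equivOfCardEq hcard
    set std : Fin m → Fin m := fun x => e.symm (Fc 0 (e x)) with hstd
    have hstd1 : ∀ v, std (std v) = v := by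
      intro v
      rw [hstd]
      simp only [Equiv.apply_symm_apply]
      rw [Fc_invol, Equiv.symm_apply_apply]
    have hstd2 : ∀ v, std v ≠ v := by
      intro v hv
      rw [hstd] at hv
      have := congrArg e hv
      rw [Equiv.apply_symm_apply] at this
      exact Fc_ne hq 0 (e v) this
    obtain ⟨g, hg⟩ := conj_invol σ std h1 h2 hstd1 hstd2
    set c : Fin (m-2) → ZMod q := fun k => (((k : ℕ) + 1 : ℕ) : ZMod q) with hc
    have hcval : ∀ k : Fin (m-2), (c k).val = (k : ℕ) + 1 := by
      intro k
      rw [hc, ZMod.val_natCast_of_lt (by omega)]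
    have hcne : ∀ k, c k ≠ 0 := by
      intro k hk
      have := hcval k
      rw [hk, ZMod.val_zero] at this
      omega
    have hcinj : Function.Injective c := by
      intro k l hkl
      have := (hcval k).symm.trans ((congrArg ZMod.val hkl).trans (hcval l))
      exact Fin.ext (by omega)
    refine ⟨fun k i => g.symm (e.symm (Fc (c k) (e (g i)))), ?_, ?_, ?_⟩
    · intro k
      constructor
      · intro v
        simp only [Equiv.apply_symm_apply, Fc_invol, Equiv.symm_apply_apply]
      · intro v hv
        have := congrArg (fun z => e (g z)) hv
        simp only [Equiv.apply_symm_apply] at this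
        exact Fc_ne hq (c k) (e (g v)) this
    · intro i k l hkl
      simp only at hkl
      have := congrArg (fun z => e (g z)) hkl
      simp only [Equiv.apply_symm_apply] at this
      exact hcinj (Fc_inj_c hq _ this)
    · intro k i
      constructor
      · intro hv
        have := congrArg (fun z => e (g z)) hv
        simp only [Equiv.apply_symm_apply] at this
        exact Fc_ne hq (c k) (e (g i)) this
      · intro hv
        have := congrArg (fun z => e (g z)) hv
        simp only [Equiv.apply_symm_apply] at this
        rw [hg i, hstd] at this
        simp only [Equiv.apply_symm_apply] at this
        exact Fc_ne_zero hq (hcne k) (e (g i)) this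

end Aux

/-- Partition `V` into clusters `C 0, ..., C (m-1)` each of size `s`, and for a perfect
matching `M'` on the clusters (encoded by a fixed-point-free involution on indices) write
`avgweight(M') = Σ_{{A,B} ∈ M'} avg(A,B)`.  If the perfect matching `σ` satisfies
`avgweight(σ) ≥ (1 − ε)·avgweight(σ')` for every perfect matching `σ'`, then
`Σ_{{A,B} ∈ M} mergecost(A,B) ≤ (2/(1 − ε))·Σ_{{A,B} ∈ M} mergerev(A,B)`. -/
theorem stmt8 {V : Type*} [Fintype V] [DecidableEq V] (m s : ℕ)
    (w : V → V → ℝ) (hsymm : ∀ i j, w i j = w j i) (hnonneg : ∀ i j, 0 ≤ w i j)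
    (C : Fin m → Finset V)
    (hdisj : ∀ i j, i ≠ j → Disjoint (C i) (C j))
    (hcover : ∀ v : V, ∃ i, v ∈ C i)
    (hsize : ∀ i, (C i).card = s)
    (ε : ℝ) (hε0 : 0 ≤ ε) (hε1 : ε < 1)
    (σ : Fin m → Fin m) (hσ : IsPerfectMatching σ)
    (hopt : ∀ σ' : Fin m → Fin m, IsPerfectMatching σ' →
      (1 - ε) * ((1 / 2) * ∑ i, avgLinkage w (C i) (C (σ' i))) ≤
        (1 / 2) * ∑ i, avgLinkage w (C i) (C (σ i))) :
    (1 / 2) * ∑ i, mergeCost w (C i) (C (σ i)) ≤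
      (2 / (1 - ε)) * ((1 / 2) * ∑ i, mergeRev w (C i) (C (σ i))) := by
  classical
  obtain ⟨hσ1, hσ2⟩ := hσ
  have h1e : (0:ℝ) < 1 - ε := by linarith
  rcases Nat.eq_zero_or_pos m with hm0 | hmpos
  · subst hm0
    simp only [Finset.univ_eq_empty, Finset.sum_empty, mul_zero]
    norm_num
  obtain ⟨t, ht⟩ : ∃ t, m = 2 * t := ⟨_, (half_card σ hσ1 hσ2).symm⟩
  have hm2 : 2 ≤ m := by omega
  set Wt : Fin m → Fin m → ℝ := fun i j => ∑ a ∈ C i, ∑ b ∈ C j, w a b with hWt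
  have hWt0 : ∀ i j, 0 ≤ Wt i j := fun i j =>
    Finset.sum_nonneg fun a _ => Finset.sum_nonneg fun b _ => hnonneg a b
  -- the optimality in terms of Wt
  have hS : ∀ σ' : Fin m → Fin m, (∀ v, σ' (σ' v) = v) → (∀ v, σ' v ≠ v) →
      (1 - ε) * ∑ i, Wt i (σ' i) ≤ ∑ i, Wt i (σ i) := by
    intro σ' h1' h2'
    by_cases hs : s = 0
    · have hCe : ∀ i, C i = ∅ := fun i => Finset.card_eq_zero.mp (by rw [hsize, hs])
      have hW0 : ∀ i j, Wt i j = 0 := by intro i j; rw [hWt]; simp [hCe]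
      simp [hW0]
    · have hsR : (0:ℝ) < (s:ℝ) := by exact_mod_cast Nat.pos_of_ne_zero hs
      have h := hopt σ' ⟨h1', h2'⟩
      simp only [avgLinkage, hsize, ← hWt] at h
      rw [← Finset.mul_sum, ← Finset.mul_sum] at h
      have hne : ((s:ℝ) * (s:ℝ)) ≠ 0 := by positivity
      have h3 := mul_le_mul_of_nonneg_left h (by positivity : (0:ℝ) ≤ 2 * ((s:ℝ) * (s:ℝ)))
      calc (1 - ε) * ∑ i, Wt i (σ' i)
          = 2 * ((s:ℝ) * (s:ℝ)) * ((1 - ε) * ((1/2) * ((1 / ((s:ℝ) * (s:ℝ))) * ∑ i, Wt i (σ' i)))) := by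
            field_simp
        _ ≤ 2 * ((s:ℝ) * (s:ℝ)) * ((1/2) * ((1 / ((s:ℝ) * (s:ℝ))) * ∑ i, Wt i (σ i))) := h3
        _ = ∑ i, Wt i (σ i) := by field_simp
  -- partition identity
  have hU : ∀ i : Fin m, (Finset.univ \ (C i ∪ C (σ i)))
      = (Finset.univ \ ({i, σ i} : Finset (Fin m))).biUnion C := by
    intro i
    ext v
    simp only [Finset.mem_sdiff, Finset.mem_univ, true_and, Finset.mem_union, Finset.mem_biUnion,
      Finset.mem_insert, Finset.mem_singleton, not_or]
    constructor
    · rintro ⟨hv1, hv2⟩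
      obtain ⟨j, hj⟩ := hcover v
      refine ⟨j, ⟨?_, ?_⟩, hj⟩
      · rintro rfl; exact hv1 hj
      · rintro rfl; exact hv2 hj
    · rintro ⟨j, ⟨hj1, hj2⟩, hj⟩
      exact ⟨fun hvi => (Finset.disjoint_left.mp (hdisj j i hj1) hj) hvi,
        fun hvi => (Finset.disjoint_left.mp (hdisj j (σ i) hj2) hj) hvi⟩
  have hinner : ∀ i i' : Fin m,
      (∑ a ∈ C i', ∑ c ∈ Finset.univ \ (C i ∪ C (σ i)), w a c)
        = ∑ j ∈ Finset.univ \ ({i, σ i} : Finset (Fin m)), Wt i' j := by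
    intro i i'
    calc (∑ a ∈ C i', ∑ c ∈ Finset.univ \ (C i ∪ C (σ i)), w a c)
        = ∑ a ∈ C i', ∑ j ∈ Finset.univ \ ({i, σ i} : Finset (Fin m)), ∑ c ∈ C j, w a c := by
          refine Finset.sum_congr rfl fun a _ => ?_
          rw [hU i]
          exact Finset.sum_biUnion (fun x _ y _ hxy => hdisj x y hxy)
      _ = ∑ j ∈ Finset.univ \ ({i, σ i} : Finset (Fin m)), Wt i' j := Finset.sum_comm
  have hMC : ∀ i : Fin m, mergeCost w (C i) (C (σ i))
      = (s:ℝ) * (∑ j ∈ Finset.univ \ ({i, σ i} : Finset (Fin m)), Wt i j)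
        + (s:ℝ) * (∑ j ∈ Finset.univ \ ({i, σ i} : Finset (Fin m)), Wt (σ i) j) := by
    intro i
    simp only [mergeCost, hsize, hinner i i, hinner i (σ i)]
  -- swap
  have hbij : Function.Bijective σ := Function.Involutive.bijective hσ1
  have hswap : (∑ i, ∑ j ∈ Finset.univ \ ({i, σ i} : Finset (Fin m)), Wt (σ i) j)
      = ∑ i, ∑ j ∈ Finset.univ \ ({i, σ i} : Finset (Fin m)), Wt i j := by
    have := Function.Bijective.sum_comp hbij
      (fun i => ∑ j ∈ Finset.univ \ ({i, σ i} : Finset (Fin m)), Wt i j)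
    rw [← this]
    refine Finset.sum_congr rfl fun i _ => ?_
    rw [hσ1, Finset.pair_comm]
  set T : ℝ := ∑ i, ∑ j ∈ Finset.univ \ ({i, σ i} : Finset (Fin m)), Wt i j with hT
  have hL : (1/2) * ∑ i, mergeCost w (C i) (C (σ i)) = (s:ℝ) * T := by
    simp only [hMC]
    rw [Finset.sum_add_distrib, ← Finset.mul_sum, ← Finset.mul_sum, hswap, ← hT]
    ring
  -- total number of vertices
  have hN : (Fintype.card V : ℝ) = (m : ℝ) * (s : ℝ) := by
    have huniv : (Finset.univ : Finset V) = Finset.univ.biUnion C := by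
      ext v
      simp only [Finset.mem_univ, Finset.mem_biUnion, true_iff]
      obtain ⟨i, hi⟩ := hcover v
      obtain ⟨i, hi⟩ := hcover v
      exact ⟨i, trivial, hi⟩
    have : Fintype.card V = m * s := by
      rw [← Finset.card_univ, huniv, Finset.card_biUnion (fun x _ y _ hxy => hdisj x y hxy)]
      simp [hsize, Finset.card_univ]
    rw [this]; push_cast; ring
  have hR : (1/2) * ∑ i, mergeRev w (C i) (C (σ i))
      = (1/2) * (((m:ℝ) * s - 2 * s) * ∑ i, Wt i (σ i)) := by
    simp only [mergeRev, hsize, hN, ← hWt]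
    rw [← Finset.mul_sum]
    ring
  -- family of matchings
  obtain ⟨τ, hτinv, hτinjk, hτne⟩ := exists_family σ hσ1 hσ2
  have hpoint : ∀ i : Fin m, (∑ j ∈ Finset.univ \ ({i, σ i} : Finset (Fin m)), Wt i j)
      = ∑ k : Fin (m-2), Wt i (τ k i) := by
    intro i
    have himg : Finset.image (fun k => τ k i) Finset.univ
        = Finset.univ \ ({i, σ i} : Finset (Fin m)) := by
      apply Finset.eq_of_subset_of_card_le
      · intro j hj
        simp only [Finset.mem_image, Finset.mem_univ, true_and] at hj
        obtain ⟨k, rfl⟩ := hj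
        simp only [Finset.mem_sdiff, Finset.mem_univ, true_and, Finset.mem_insert,
          Finset.mem_singleton, not_or]
        exact ⟨(hτne k i).1, (hτne k i).2⟩
      · rw [Finset.card_sdiff_of_subset (Finset.subset_univ _), Finset.card_univ, Fintype.card_fin,
          Finset.card_pair (Ne.symm (hσ2 i)),
          Finset.card_image_of_injective _ (hτinjk i), Finset.card_univ, Fintype.card_fin]
    rw [← himg, Finset.sum_image (fun k _ l _ h => hτinjk i h)]
  have hTeq : T = ∑ k : Fin (m-2), ∑ i, Wt i (τ k i) := by
    rw [hT, Finset.sum_congr rfl (fun i _ => hpoint i), Finset.sum_comm]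
  have hTle : (1 - ε) * T ≤ ((m:ℝ) - 2) * ∑ i, Wt i (σ i) := by
    calc (1 - ε) * T = ∑ k : Fin (m-2), (1 - ε) * ∑ i, Wt i (τ k i) := by
          rw [hTeq, Finset.mul_sum]
      _ ≤ ∑ _k : Fin (m-2), ∑ i, Wt i (σ i) :=
          Finset.sum_le_sum fun k _ => hS (τ k) (hτinv k).1 (hτinv k).2
      _ = ((m - 2 : ℕ) : ℝ) * ∑ i, Wt i (σ i) := by
          rw [Finset.sum_const, Finset.card_univ, Fintype.card_fin, nsmul_eq_mul]
      _ = ((m:ℝ) - 2) * ∑ i, Wt i (σ i) := by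
          rw [Nat.cast_sub hm2]; norm_num
  rw [hL, hR]
  rw [div_mul_eq_mul_div, le_div_iff₀ h1e]
  have hsnn : (0:ℝ) ≤ (s:ℝ) := Nat.cast_nonneg s
  have hsT := mul_le_mul_of_nonneg_left hTle hsnn
  nlinarith [hsT]
end

section
/- Let (V,w) be a weighted graph with |V| = n ≥ 2, let W denote the total weight Σ over unordered pairs {i,j} of distinct vertices of w(i,j), and let c ≥ 0 be a real number. If T is a hierarchical clustering tree on V with cost(T) ≤ 2W + c·rev(T), then (1+c)·rev(T) ≥ (n−2)·W; consequently rev(T) ≥ (1/(1+c))·rev(T') for every hierarchical clustering tree T' on V. -/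
open Finset

/-!
For each pair `{i, j}` the cluster `leaves(T[i ∨ j])` and its complement partition `V`, so
`cost(T) + rev(T) = n·W` for every tree. The cluster of two distinct leaves has at least two
elements, so `cost(T') ≥ 2W`, i.e. `rev(T') ≤ (n - 2)·W`, for every tree `T'`; the hypothesis
on `T` turns `cost(T) + rev(T) = n·W` into `(1 + c)·rev(T) ≥ (n - 2)·W`.
-/

namespace HC

variable {V : Type*} [DecidableEq V]

lemma pair_subset_cluster (t : HC V) {i j : V} (hi : i ∈ t.leaves) (hj : j ∈ t.leaves) :
    {i, j} ⊆ t.cluster i j := by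
  induction t with
  | leaf v =>
    simp only [leaves, leafList, List.toFinset_cons, List.toFinset_nil, insert_empty_eq,
      mem_singleton] at hi hj
    subst hi hj
    simp [cluster]
  | node l r ihl ihr =>
    simp only [cluster]
    split_ifs with hl hr
    · exact ihl hl.1 hl.2
    · exact ihr hr.1 hr.2
    · exact insert_subset hi (singleton_subset_iff.mpr hj)

variable [Fintype V]

lemma IsTreeOn.two_le_card_cluster {t : HC V} (ht : t.IsTreeOn) {i j : V} (hij : i ≠ j) :
    2 ≤ (t.cluster i j).card := by
  rw [← card_pair hij]
  exact card_le_card (t.pair_subset_cluster (by simp [ht.2]) (by simp [ht.2]))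

lemma cost_add_rev (w : V → V → ℝ) (t : HC V) :
    cost w t + rev w t = (Fintype.card V : ℝ) * totalWeight w := by
  unfold cost rev totalWeight
  rw [← mul_add, ← sum_add_distrib, mul_left_comm, mul_sum _ _ (Fintype.card V : ℝ)]
  congr 1
  refine sum_congr rfl fun p _ => ?_
  rw [← compl_eq_univ_sdiff, card_compl, Nat.cast_sub (card_le_univ _)]
  ring

lemma IsTreeOn.two_mul_totalWeight_le_cost {w : V → V → ℝ} (hw : ∀ i j, 0 ≤ w i j)
    {t : HC V} (ht : t.IsTreeOn) : 2 * totalWeight w ≤ cost w t := by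
  unfold cost totalWeight
  rw [mul_left_comm, mul_sum]
  gcongr 1 / 2 * ?_
  refine sum_le_sum fun p hp => ?_
  rw [mul_comm 2]
  gcongr
  · exact hw _ _
  · exact_mod_cast ht.two_le_card_cluster (mem_offDiag.mp hp).2.2

lemma IsTreeOn.rev_le {w : V → V → ℝ} (hw : ∀ i j, 0 ≤ w i j) {t : HC V} (ht : t.IsTreeOn) :
    rev w t ≤ ((Fintype.card V : ℝ) - 2) * totalWeight w := by
  linarith [cost_add_rev w t, ht.two_mul_totalWeight_le_cost hw]

lemma sub_two_mul_totalWeight_le_of_cost_le {w : V → V → ℝ} {t : HC V} {c : ℝ}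
    (hcost : cost w t ≤ 2 * totalWeight w + c * rev w t) :
    ((Fintype.card V : ℝ) - 2) * totalWeight w ≤ (1 + c) * rev w t := by
  linarith [cost_add_rev w t]

end HC

theorem stmt9_general {V : Type*} [Fintype V] [DecidableEq V] (n : ℕ)
    (hn : Fintype.card V = n)
    (w : V → V → ℝ) (hnonneg : ∀ i j, 0 ≤ w i j)
    (c : ℝ) (hc : 0 ≤ c)
    (t : HC V)
    (hcost : HC.cost w t ≤ 2 * totalWeight w + c * HC.rev w t) :
    (1 + c) * HC.rev w t ≥ ((n : ℝ) - 2) * totalWeight w ∧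
      ∀ t' : HC V, t'.IsTreeOn → HC.rev w t ≥ (1 / (1 + c)) * HC.rev w t' := by
  subst hn
  have hlower := HC.sub_two_mul_totalWeight_le_of_cost_le hcost
  refine ⟨hlower, fun t' ht' => ?_⟩
  rw [ge_iff_le, one_div_mul_eq_div, div_le_iff₀' (by linarith)]
  exact (ht'.rev_le hnonneg).trans hlower

/-- If `cost(T) ≤ 2W + c·rev(T)` for some `c ≥ 0`, then `(1 + c)·rev(T) ≥ (n − 2)·W`;
consequently `rev(T) ≥ (1/(1 + c))·rev(T')` for every hierarchical clustering tree `T'`. -/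
theorem stmt9 {V : Type*} [Fintype V] [DecidableEq V] (n : ℕ)
    (hn : Fintype.card V = n) (hn2 : 2 ≤ n)
    (w : V → V → ℝ) (hsymm : ∀ i j, w i j = w j i) (hnonneg : ∀ i j, 0 ≤ w i j)
    (c : ℝ) (hc : 0 ≤ c)
    (t : HC V) (ht : t.IsTreeOn)
    (hcost : HC.cost w t ≤ 2 * totalWeight w + c * HC.rev w t) :
    (1 + c) * HC.rev w t ≥ ((n : ℝ) - 2) * totalWeight w ∧
      ∀ t' : HC V, t'.IsTreeOn → HC.rev w t ≥ (1 / (1 + c)) * HC.rev w t' :=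
  stmt9_general n hn w hnonneg c hc t hcost
end

section
/- Let V be a finite set of n vertices with a symmetric nonnegative weight function w on unordered pairs of distinct vertices, let W_max = max over pairs of w, let k be a nonnegative integer with 2k ≤ n, and let Q be a real number with Q ≥ W_max and Q ≥ 0. Form the extended weighted graph G' on vertex set V ∪ U, where U is a disjoint set of n − 2k new vertices, with weights: w(u,v) on pairs within V, Q on every pair consisting of one vertex of U and one vertex of V, and 0 on pairs within U. Then the maximum total weight of a matching in G' (a set of pairwise disjoint unordered pairs of vertices of V ∪ U) equals (n − 2k)·Q + M_k, where M_k is the maximum total weight of a matching in V consisting of at most k pairs. -/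
open Finset

/-- The extended weight function on `V ⊕ U`: original weights within `V`, weight `Q`
between `V` and the dummy vertices `U`, and weight `0` within `U`. -/
noncomputable def extWeight {V U : Type*} (w : V → V → ℝ) (Q : ℝ) :
    (V ⊕ U) → (V ⊕ U) → ℝ :=
  fun x y =>
    match x, y with
    | Sum.inl a, Sum.inl b => w a b
    | Sum.inl _, Sum.inr _ => Q
    | Sum.inr _, Sum.inl _ => Q
    | Sum.inr _, Sum.inr _ => 0


/-!
A matching `g` of `V ⊕ U` induces the matching `restrictInl g` on `V`, in which the set `A` of
vertices matched into `U` is left unmatched, and `weight g = weight (restrictInl g) + |A| Q`.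
Conversely, a matching of `V` with at most `k` pairs leaves at least `n - 2k` vertices free, and
matching `n - 2k` of them with `U` gains `(n - 2k) Q`. For the upper bound, `restrictInl g` avoids
`A`, so it has at most `k + (n - 2k - |A|)` pairs; removing pairs one at a time, each worth at
most `Q`, brings it down to a `k`-matching.
-/

namespace Matching

variable {V U : Type*}

def matchedVertices [Fintype V] [DecidableEq V] (f : V → V) : Finset V :=
  univ.filter fun v => f v ≠ v

lemma matchingWeight_eq_half_sum_ite [Fintype V] [DecidableEq V] (w : V → V → ℝ) (f : V → V) :
    matchingWeight w f = (1 / 2) * ∑ v, if f v ≠ v then w v (f v) else 0 := by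
  rw [matchingWeight, Finset.sum_filter]

section RemovePair

variable [DecidableEq V] {f : V → V} {a : V}

def removePair (f : V → V) (a : V) (v : V) : V :=
  if v = a ∨ v = f a then v else f v

lemma removePair_of_not_mem_pair {v : V} (hv : ¬(v = a ∨ v = f a)) :
    removePair f a v = f v := if_neg hv

lemma involutive_removePair (hf : Function.Involutive f) :
    Function.Involutive (removePair f a) := by
  intro v
  by_cases hv : v = a ∨ v = f a
  · simp only [removePair, if_pos hv]
  · have hfv : ¬(f v = a ∨ f v = f a) := by
      rintro (h | h)
      · exact hv (Or.inr (by rw [← h, hf]))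
      · exact hv (Or.inl (hf.injective h))
    rw [removePair_of_not_mem_pair hv, removePair_of_not_mem_pair hfv, hf]

variable [Fintype V]

lemma matchedVertices_removePair :
    matchedVertices (removePair f a) = matchedVertices f \ {a, f a} := by
  ext v
  by_cases hv : v = a ∨ v = f a
  · rcases hv with rfl | rfl <;> simp [matchedVertices, removePair]
  · simp [matchedVertices, removePair, not_or.mp hv]

lemma pair_subset_matchedVertices (hf : Function.Involutive f) (ha : f a ≠ a) :
    {a, f a} ⊆ matchedVertices f := by
  intro v hv
  rcases Finset.mem_insert.mp hv with rfl | hv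
  · simpa [matchedVertices] using ha
  · rw [Finset.mem_singleton.mp hv]
    simpa [matchedVertices, hf a] using ha.symm

lemma matchingWeight_removePair (w : V → V → ℝ) (hf : Function.Involutive f) (ha : f a ≠ a) :
    matchingWeight w f = matchingWeight w (removePair f a) + (w a (f a) + w (f a) a) / 2 := by
  have hrest : ∑ v ∈ matchedVertices f \ {a, f a}, w v (f v)
      = ∑ v ∈ matchedVertices (removePair f a), w v (removePair f a v) := by
    rw [matchedVertices_removePair]
    refine Finset.sum_congr rfl fun v hv => ?_
    rw [removePair_of_not_mem_pair (by simpa using (Finset.mem_sdiff.mp hv).2)]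
  have hpair : ∑ v ∈ {a, f a}, w v (f v) = w a (f a) + w (f a) a := by
    rw [Finset.sum_pair ha.symm, hf a]
  have hsplit := Finset.sum_sdiff (f := fun v => w v (f v)) (pair_subset_matchedVertices hf ha)
  change 1 / 2 * ∑ v ∈ matchedVertices f, _ = 1 / 2 * ∑ v ∈ matchedVertices (removePair f a), _ + _
  rw [← hrest, ← hsplit, hpair]
  ring

end RemovePair

/-- Induction on `j`: dropping one pair of a matching loses at most `Q`. -/
lemma matchingWeight_le_of_card_matchedVertices_le [Fintype V] [DecidableEq V] {w : V → V → ℝ}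
    {Q Mk : ℝ} {k : ℕ} (hQ0 : 0 ≤ Q) (hQmax : ∀ i j, i ≠ j → w i j ≤ Q)
    (hMk : ∀ f : V → V, Function.Involutive f → (matchedVertices f).card ≤ 2 * k →
      matchingWeight w f ≤ Mk) :
    ∀ (j : ℕ) (f : V → V), Function.Involutive f → (matchedVertices f).card ≤ 2 * k + 2 * j →
      matchingWeight w f ≤ Mk + j * Q := by
  intro j
  induction j with
  | zero => simpa using hMk
  | succ j ih =>
    intro f hf hcard
    by_cases hsmall : (matchedVertices f).card ≤ 2 * k
    · have hle := hMk f hf hsmall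
      have hjQ : 0 ≤ ((j + 1 : ℕ) : ℝ) * Q := by positivity
      linarith
    obtain ⟨a, ha⟩ : (matchedVertices f).Nonempty := Finset.card_pos.mp (by omega)
    replace ha : f a ≠ a := by simpa [matchedVertices] using ha
    have hcard' : (matchedVertices (removePair f a)).card ≤ 2 * k + 2 * j := by
      rw [matchedVertices_removePair,
        Finset.card_sdiff_of_subset (pair_subset_matchedVertices hf ha), Finset.card_pair ha.symm]
      omega
    have hrest := ih _ (involutive_removePair hf) hcard'
    have h1 := hQmax a (f a) ha.symm
    have h2 := hQmax (f a) a ha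
    rw [matchingWeight_removePair w hf ha]
    push_cast
    linarith

section Restriction

def restrictInl (g : V ⊕ U → V ⊕ U) (v : V) : V :=
  Sum.elim id (fun _ => v) (g (Sum.inl v))

def crossVertices [Fintype V] (g : V ⊕ U → V ⊕ U) : Finset V :=
  univ.filter fun v => (g (Sum.inl v)).isRight

variable {g : V ⊕ U → V ⊕ U}

lemma restrictInl_of_eq_inl {v v' : V} (h : g (Sum.inl v) = Sum.inl v') :
    restrictInl g v = v' := by
  simp [restrictInl, h]

lemma restrictInl_of_eq_inr {v : V} {u : U} (h : g (Sum.inl v) = Sum.inr u) :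
    restrictInl g v = v := by
  simp [restrictInl, h]

lemma involutive_restrictInl (hg : Function.Involutive g) :
    Function.Involutive (restrictInl g) := by
  intro v
  cases h : g (Sum.inl v) with
  | inl v' =>
    have h' : g (Sum.inl v') = Sum.inl v := by rw [← h, hg]
    rw [restrictInl_of_eq_inl h, restrictInl_of_eq_inl h']
  | inr u => rw [restrictInl_of_eq_inr h, restrictInl_of_eq_inr h]

lemma disjoint_crossVertices_matchedVertices [Fintype V] [DecidableEq V] :
    Disjoint (crossVertices g) (matchedVertices (restrictInl g)) := by
  refine Finset.disjoint_left.mpr fun v hcross hmatched => ?_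
  obtain ⟨u, hu⟩ := Sum.isRight_iff.mp (Finset.mem_filter.mp hcross).2
  exact (Finset.mem_filter.mp hmatched).2 (restrictInl_of_eq_inr hu)

variable [Fintype V] [Fintype U]

/-- Reindexing by the involution `g` itself counts the `V`–`U` pairs from either side. -/
lemma card_filter_isLeft_eq_card_crossVertices (hg : Function.Involutive g) :
    (univ.filter fun u : U => (g (Sum.inr u)).isLeft).card = (crossVertices g).card := by
  have hswap := Equiv.sum_comp hg.toPerm
    (fun x => if x.isRight ∧ (g x).isLeft then (1 : ℕ) else 0)
  simp only [Function.Involutive.coe_toPerm, hg (_ : V ⊕ U), Fintype.sum_sum_type, Sum.isLeft_inl,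
    Sum.isLeft_inr, Sum.isRight_inl, Sum.isRight_inr, Bool.false_eq_true, and_true, and_false,
    false_and, true_and, if_false, Finset.sum_const_zero, zero_add, add_zero] at hswap
  rw [crossVertices, Finset.card_filter, Finset.card_filter, hswap]

lemma card_crossVertices_le (hg : Function.Involutive g) :
    (crossVertices g).card ≤ Fintype.card U := by
  rw [← card_filter_isLeft_eq_card_crossVertices hg]
  exact Finset.card_filter_le _ _

lemma matchingWeight_extWeight [DecidableEq V] [DecidableEq U] (w : V → V → ℝ) (Q : ℝ)
    (hg : Function.Involutive g) :
    matchingWeight (extWeight w Q) g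
      = matchingWeight w (restrictInl g) + (crossVertices g).card * Q := by
  have hV : ∀ v : V,
      (if g (Sum.inl v) ≠ Sum.inl v then extWeight w Q (Sum.inl v) (g (Sum.inl v)) else 0)
        = (if v ∈ crossVertices g then Q else 0)
          + (if restrictInl g v ≠ v then w v (restrictInl g v) else 0) := by
    intro v
    cases h : g (Sum.inl v) with
    | inl v' => simp [crossVertices, restrictInl_of_eq_inl h, h, extWeight]
    | inr u => simp [crossVertices, restrictInl_of_eq_inr h, h, extWeight]
  have hU : ∀ u : U,
      (if g (Sum.inr u) ≠ Sum.inr u then extWeight w Q (Sum.inr u) (g (Sum.inr u)) else 0)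
        = if (g (Sum.inr u)).isLeft then Q else 0 := by
    intro u
    cases h : g (Sum.inr u) with
    | inl v => simp [extWeight]
    | inr u' => by_cases hu : u' = u <;> simp [extWeight, hu]
  rw [matchingWeight_eq_half_sum_ite, matchingWeight_eq_half_sum_ite, Fintype.sum_sum_type]
  simp only [hV, hU, Finset.sum_add_distrib, ← Finset.sum_filter, Finset.sum_const, nsmul_eq_mul,
    card_filter_isLeft_eq_card_crossVertices hg, Finset.filter_mem_eq_inter, Finset.univ_inter]
  ring

end Restriction

section Extension

variable [DecidableEq V] {f : V → V} {T : Finset V}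

def extendAlong (f : V → V) (T : Finset V) (e : T ≃ U) : V ⊕ U → V ⊕ U
  | Sum.inl v => if h : v ∈ T then Sum.inr (e ⟨v, h⟩) else Sum.inl (f v)
  | Sum.inr u => Sum.inl (e.symm u)

lemma involutive_extendAlong (hf : Function.Involutive f) (hT : ∀ v ∈ T, f v = v) (e : T ≃ U) :
    Function.Involutive (extendAlong f T e) := by
  rintro (v | u)
  · by_cases hv : v ∈ T
    · simp [extendAlong, hv]
    · have hfv : f v ∉ T := fun h => hv (by rwa [← hf v, hT _ h])
      simp [extendAlong, hv, hfv, hf v]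
  · simp [extendAlong]

lemma restrictInl_extendAlong (hT : ∀ v ∈ T, f v = v) (e : T ≃ U) :
    restrictInl (extendAlong f T e) = f := by
  funext v
  by_cases hv : v ∈ T
  · simp [restrictInl, extendAlong, hv, hT v hv]
  · simp [restrictInl, extendAlong, hv]

lemma crossVertices_extendAlong [Fintype V] (e : T ≃ U) :
    crossVertices (extendAlong f T e) = T := by
  ext v
  rw [crossVertices, Finset.mem_filter]
  by_cases hv : v ∈ T <;> simp [extendAlong, hv]

end Extension

end Matching

theorem stmt19_general {V : Type*} [Fintype V] [DecidableEq V] (n k : ℕ)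
    (hcard : Fintype.card V = n)
    (w : V → V → ℝ)
    (Q : ℝ) (hQ0 : 0 ≤ Q) (hQmax : ∀ i j, i ≠ j → w i j ≤ Q)
    (Mk : ℝ)
    (hMk : IsGreatest {x : ℝ | ∃ f : V → V, (∀ v, f (f v) = v) ∧
        (Finset.univ.filter fun v => f v ≠ v).card ≤ 2 * k ∧
        x = matchingWeight w f} Mk) :
    IsGreatest {x : ℝ | ∃ g : (V ⊕ Fin (n - 2 * k)) → (V ⊕ Fin (n - 2 * k)),
        (∀ u, g (g u) = u) ∧ x = matchingWeight (extWeight w Q) g}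
      (((n - 2 * k : ℕ) : ℝ) * Q + Mk) := by
  constructor
  · obtain ⟨f, hf, hfk, rfl⟩ := hMk.1
    have hfixed : n - 2 * k ≤ (univ.filter fun v => f v = v).card := by
      have := Finset.card_filter_add_card_filter_not (s := univ) fun v => f v = v
      rw [Finset.card_univ, hcard] at this
      simp only [ne_eq] at hfk
      omega
    obtain ⟨T, hTfixed, hTcard⟩ := Finset.exists_subset_card_eq hfixed
    have hT : ∀ v ∈ T, f v = v := fun v hv => (Finset.mem_filter.mp (hTfixed hv)).2
    have hg := Matching.involutive_extendAlong hf hT (T.equivFinOfCardEq hTcard)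
    refine ⟨_, hg, ?_⟩
    rw [Matching.matchingWeight_extWeight w Q hg, Matching.restrictInl_extendAlong hT,
      Matching.crossVertices_extendAlong, hTcard]
    ring
  · rintro _ ⟨g, hg, rfl⟩
    have hcross := Matching.card_crossVertices_le hg
    rw [Fintype.card_fin] at hcross
    have hsplit := Finset.card_le_univ
      (Matching.crossVertices g ∪ Matching.matchedVertices (Matching.restrictInl g))
    rw [Finset.card_union_of_disjoint Matching.disjoint_crossVertices_matchedVertices, hcard]
      at hsplit
    have hbound := Matching.matchingWeight_le_of_card_matchedVertices_le hQ0 hQmax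
      (fun f hf hfk => hMk.2 ⟨f, hf, hfk, rfl⟩) (n - 2 * k - (Matching.crossVertices g).card)
      _ (Matching.involutive_restrictInl hg) (by omega)
    rw [Nat.cast_sub hcross] at hbound
    rw [Matching.matchingWeight_extWeight w Q hg]
    linarith

/-- Let `|V| = n`, `2k ≤ n`, `w` a symmetric nonnegative weight function on `V`, and
`Q ≥ 0` with `Q ≥ w i j` for all distinct `i, j` (i.e. `Q ≥ W_max`).  If `Mk` is the
maximum weight of a matching in `V` with at most `k` pairs, then the maximum weight of a
matching in the extended graph on `V ⊕ Fin (n − 2k)` is `(n − 2k)·Q + Mk`.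
Matchings are encoded as involutions; the matched pairs are the non-fixed orbits. -/
theorem stmt19 {V : Type*} [Fintype V] [DecidableEq V] (n k : ℕ)
    (hcard : Fintype.card V = n) (hk : 2 * k ≤ n)
    (w : V → V → ℝ) (hsymm : ∀ i j, w i j = w j i) (hnonneg : ∀ i j, 0 ≤ w i j)
    (Q : ℝ) (hQ0 : 0 ≤ Q) (hQmax : ∀ i j, i ≠ j → w i j ≤ Q)
    (Mk : ℝ)
    (hMk : IsGreatest {x : ℝ | ∃ f : V → V, (∀ v, f (f v) = v) ∧
        (Finset.univ.filter fun v => f v ≠ v).card ≤ 2 * k ∧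
        x = matchingWeight w f} Mk) :
    IsGreatest {x : ℝ | ∃ g : (V ⊕ Fin (n - 2 * k)) → (V ⊕ Fin (n - 2 * k)),
        (∀ u, g (g u) = u) ∧ x = matchingWeight (extWeight w Q) g}
      (((n - 2 * k : ℕ) : ℝ) * Q + Mk) :=
  stmt19_general n k hcard w Q hQ0 hQmax Mk hMk
end
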